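/- Let S be an inverse semigroup and let F be a filter in E(S). Define F̄ = {s ∈ S : for all f ∈ F, inv(s)·f·s ∈ F and s·f·inv(s) ∈ F}. Then F̄ is a closed inverse subsemigroup of S whose set of idempotents is exactly F. -/

import Mathlib

/-!
Conjugation `x ↦ inv s * x * s` (and `x ↦ s * x * inv s`) is monotone for the natural
partial order, and the natural order is compatible with products and inverses. Hence `F̄` is closed under
products, inverses and passing upward, because `F` is upward closed in `E(S)`. An idempotent
`e ∈ F̄` lies above `e * f * e ∈ F` for any `f ∈ F`, so `e ∈ F`; conversely for `e, f ∈ F`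
the conjugate `e * f * e = f * e` lies in `F`, so `e ∈ F̄`.
-/

namespace InvSgpPaper

/-- `inv` makes the semigroup `S` an inverse semigroup: `a * inv a * a = a`,
`inv a * a * inv a = inv a`, and all idempotents commute. -/
structure IsInvSgp (S : Type*) [Semigroup S] (inv : S → S) : Prop where
  mul_inv_mul : ∀ a : S, a * inv a * a = a
  inv_mul_inv : ∀ a : S, inv a * a * inv a = inv a
  idem_comm : ∀ e f : S, e * e = e → f * f = f → e * f = f * e

section Defs

variable {S X Y : Type*} [Semigroup S]

/-- The natural partial order on an inverse semigroup:
`a ≤ b` iff `a = e * b` for some idempotent `e`. -/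
def nle (a b : S) : Prop := ∃ e : S, e * e = e ∧ a = e * b

/-- The upward closure `A↑` of a subset `A`. -/
def up (A : Set S) : Set S := {s : S | ∃ a ∈ A, nle a s}

/-- A closed inverse subsemigroup: closed under multiplication, under `inv`,
and upward closed (`H = H↑`). -/
def IsClosedInvSub (inv : S → S) (H : Set S) : Prop :=
  (∀ a ∈ H, ∀ b ∈ H, a * b ∈ H) ∧ (∀ a ∈ H, inv a ∈ H) ∧ up H = H

/-- The left coset `(sH)↑ = {x | s * h ≤ x for some h ∈ H}`. -/
def lcoset (s : S) (H : Set S) : Set S := {x : S | ∃ h ∈ H, nle (s * h) x}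

/-- The set of idempotents of a subset `A`. -/
def idemSet (A : Set S) : Set S := {e ∈ A | e * e = e}

/-- A filter in `E(S)`: a nonempty set of idempotents closed under
multiplication and upward closed within `E(S)`. -/
def IsFilterE (F : Set S) : Prop :=
  F.Nonempty ∧ (∀ e ∈ F, e * e = e) ∧ (∀ e ∈ F, ∀ f ∈ F, e * f ∈ F) ∧
    (∀ e ∈ F, ∀ f : S, f * f = f → nle e f → f ∈ F)

/-- `F̄ = {s ∈ S : ∀ f ∈ F, inv s * f * s ∈ F ∧ s * f * inv s ∈ F}`. -/
def fbar (inv : S → S) (F : Set S) : Set S :=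
  {s : S | ∀ f ∈ F, inv s * f * s ∈ F ∧ s * f * inv s ∈ F}

/-- The minimum group congruence `σ`: `a σ b` iff some `c` satisfies `c ≤ a` and `c ≤ b`. -/
def sigmaRel (a b : S) : Prop := ∃ c : S, nle c a ∧ nle c b

/-- The elementwise product of two subsets. -/
def setMul (A B : Set S) : Set S := {x : S | ∃ a ∈ A, ∃ b ∈ B, x = a * b}

/-- The elementwise inverse `A⁻¹` of a subset. -/
def setInv (inv : S → S) (A : Set S) : Set S := inv '' A

/-- An atlas: a subset `A` with `A·A⁻¹·A = A`. -/
def IsAtlas (inv : S → S) (A : Set S) : Prop := setMul (setMul A (setInv inv A)) A = A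

/-- A (down-)directed subset: nonempty, and any two elements have a common
lower bound inside it. -/
def IsDirectedSet (A : Set S) : Prop :=
  A.Nonempty ∧ ∀ a ∈ A, ∀ b ∈ A, ∃ c ∈ A, nle c a ∧ nle c b

/-- An action of `S` on `X` by partial maps, axioms (A1) and (A2). -/
def IsAction (act : S → X → Option X) : Prop :=
  (∀ e : S, e * e = e → ∀ x y : X, act e x = some y → y = x) ∧
    (∀ (s t : S) (x : X), act (s * t) x = (act t x).bind (act s))

/-- Transitivity of an action. -/
def IsTransitiveAct (act : S → X → Option X) : Prop :=
  ∀ x y : X, ∃ s : S, act s x = some y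

/-- Effectiveness of an action: every point is in the domain of some element. -/
def IsEffectiveAct (act : S → X → Option X) : Prop :=
  ∀ x : X, ∃ (s : S) (x' : X), act s x = some x'

/-- The stabilizer of a point. -/
def stab (act : S → X → Option X) (x : X) : Set S := {s : S | act s x = some x}

/-- A morphism of `S`-actions. -/
def IsMorphism (actX : S → X → Option X) (actY : S → Y → Option Y) (α : X → Y) : Prop :=
  ∀ (s : S) (x x' : X), actX s x = some x' → actY s (α x) = some (α x')

/-- A strong morphism of `S`-actions. -/
def IsStrongMorphism (actX : S → X → Option X) (actY : S → Y → Option Y)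
    (α : X → Y) : Prop :=
  IsMorphism actX actY α ∧
    ∀ (s : S) (x : X) (y' : Y), actY s (α x) = some y' → ∃ x' : X, actX s x = some x'

end Defs

namespace IsInvSgp

variable {S : Type*} [Semigroup S] {inv : S → S}

theorem mul_inv_idem (hS : IsInvSgp S inv) (a : S) : a * inv a * (a * inv a) = a * inv a := by
  rw [← mul_assoc, hS.mul_inv_mul]

theorem inv_mul_idem (hS : IsInvSgp S inv) (a : S) : inv a * a * (inv a * a) = inv a * a := by
  rw [← mul_assoc, hS.inv_mul_inv]

theorem idem_mul (hS : IsInvSgp S inv) {e f : S} (he : e * e = e) (hf : f * f = f) :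
    e * f * (e * f) = e * f := by
  calc e * f * (e * f) = e * (f * e) * f := by simp only [mul_assoc]
    _ = e * e * (f * f) := by rw [hS.idem_comm f e hf he]; simp only [mul_assoc]
    _ = e * f := by rw [he, hf]

theorem eq_of_isInverse (hS : IsInvSgp S inv) {a x y : S}
    (hx₁ : a * x * a = a) (hx₂ : x * a * x = x)
    (hy₁ : a * y * a = a) (hy₂ : y * a * y = y) : x = y := by
  have idem_left : ∀ z, z * a * z = z → a * z * (a * z) = a * z := fun z hz => by
    rw [← mul_assoc, mul_assoc a z a, mul_assoc a, hz]
  have idem_right : ∀ z, z * a * z = z → z * a * (z * a) = z * a := fun z hz => by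
    rw [← mul_assoc, hz]
  have hx : x = y * a * x :=
    calc x = x * (a * y * a) * x := by rw [hy₁, hx₂]
      _ = x * a * (y * a) * x := by simp only [mul_assoc]
      _ = y * a * (x * a * x) := by
        rw [hS.idem_comm _ _ (idem_right x hx₂) (idem_right y hy₂)]; simp only [mul_assoc]
      _ = y * a * x := by rw [hx₂]
  have hy : y = y * a * x :=
    calc y = y * (a * x * a) * y := by rw [hx₁, hy₂]
      _ = y * (a * x * (a * y)) := by simp only [mul_assoc]
      _ = y * a * y * a * x := by
        rw [hS.idem_comm _ _ (idem_left x hx₂) (idem_left y hy₂)]; simp only [mul_assoc]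
      _ = y * a * x := by rw [hy₂]
  rw [hx, ← hy]

theorem inv_inv (hS : IsInvSgp S inv) (a : S) : inv (inv a) = a :=
  hS.eq_of_isInverse (hS.mul_inv_mul (inv a)) (hS.inv_mul_inv (inv a))
    (hS.inv_mul_inv a) (hS.mul_inv_mul a)

theorem inv_eq_self_of_idem (hS : IsInvSgp S inv) {e : S} (he : e * e = e) : inv e = e := by
  have h : e * e * e = e := by rw [he, he]
  exact hS.eq_of_isInverse (hS.mul_inv_mul e) (hS.inv_mul_inv e) h h

theorem inv_mul_rev (hS : IsInvSgp S inv) (a b : S) : inv (a * b) = inv b * inv a := by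
  refine hS.eq_of_isInverse (hS.mul_inv_mul (a * b)) (hS.inv_mul_inv (a * b)) ?_ ?_
  · calc a * b * (inv b * inv a) * (a * b) = a * (b * inv b * (inv a * a)) * b := by
          simp only [mul_assoc]
      _ = a * inv a * a * (b * inv b * b) := by
          rw [hS.idem_comm _ _ (hS.mul_inv_idem b) (hS.inv_mul_idem a)]; simp only [mul_assoc]
      _ = a * b := by rw [hS.mul_inv_mul, hS.mul_inv_mul]
  · calc inv b * inv a * (a * b) * (inv b * inv a)
          = inv b * (inv a * a * (b * inv b)) * inv a := by simp only [mul_assoc]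
      _ = inv b * b * inv b * (inv a * a * inv a) := by
          rw [hS.idem_comm _ _ (hS.inv_mul_idem a) (hS.mul_inv_idem b)]; simp only [mul_assoc]
      _ = inv b * inv a := by rw [hS.inv_mul_inv, hS.inv_mul_inv]

theorem conj_idem (hS : IsInvSgp S inv) {e : S} (he : e * e = e) (a : S) :
    inv a * e * a * (inv a * e * a) = inv a * e * a := by
  calc inv a * e * a * (inv a * e * a) = inv a * (e * (a * inv a)) * (e * a) := by
        simp only [mul_assoc]
    _ = inv a * a * inv a * (e * e * a) := by
        rw [hS.idem_comm _ _ he (hS.mul_inv_idem a)]; simp only [mul_assoc]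
    _ = inv a * e * a := by rw [hS.inv_mul_inv, he, mul_assoc]

theorem conj_idem' (hS : IsInvSgp S inv) {e : S} (he : e * e = e) (a : S) :
    a * e * inv a * (a * e * inv a) = a * e * inv a := by
  simpa only [hS.inv_inv] using hS.conj_idem he (inv a)

theorem mul_idem_eq_conj_mul (hS : IsInvSgp S inv) {e : S} (he : e * e = e) (c : S) :
    c * e = c * e * inv c * c := by
  calc c * e = c * inv c * c * e := by rw [hS.mul_inv_mul]
    _ = c * (inv c * c * e) := by simp only [mul_assoc]
    _ = c * e * inv c * c := by
      rw [← hS.idem_comm _ _ he (hS.inv_mul_idem c)]; simp only [mul_assoc]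

end IsInvSgp

section NaturalOrder

variable {S : Type*} [Semigroup S] {inv : S → S}

theorem nle_refl (hS : IsInvSgp S inv) (a : S) : nle a a :=
  ⟨a * inv a, hS.mul_inv_idem a, (hS.mul_inv_mul a).symm⟩

theorem nle_trans (hS : IsInvSgp S inv) {a b c : S} (hab : nle a b) (hbc : nle b c) :
    nle a c := by
  obtain ⟨e, he, rfl⟩ := hab
  obtain ⟨f, hf, rfl⟩ := hbc
  exact ⟨e * f, hS.idem_mul he hf, (mul_assoc e f c).symm⟩

theorem nle_mul_right {a b : S} (hab : nle a b) (c : S) : nle (a * c) (b * c) := by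
  obtain ⟨e, he, rfl⟩ := hab
  exact ⟨e, he, mul_assoc e b c⟩

theorem nle_mul_left (hS : IsInvSgp S inv) {a b : S} (hab : nle a b) (c : S) :
    nle (c * a) (c * b) := by
  obtain ⟨e, he, rfl⟩ := hab
  refine ⟨c * e * inv c, hS.conj_idem' he c, ?_⟩
  rw [← mul_assoc, ← mul_assoc, ← hS.mul_idem_eq_conj_mul he c]

theorem nle_inv (hS : IsInvSgp S inv) {a b : S} (hab : nle a b) : nle (inv a) (inv b) := by
  obtain ⟨e, he, rfl⟩ := hab
  refine ⟨inv b * e * inv (inv b), hS.conj_idem' he (inv b), ?_⟩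
  rw [hS.inv_mul_rev, hS.inv_eq_self_of_idem he, ← hS.mul_idem_eq_conj_mul he (inv b)]

theorem nle_conj (hS : IsInvSgp S inv) {a s : S} (has : nle a s) (f : S) :
    nle (inv a * f * a) (inv s * f * s) :=
  nle_trans hS (nle_mul_right (nle_mul_right (nle_inv hS has) f) a)
    (nle_mul_left hS has (inv s * f))

theorem nle_conj' (hS : IsInvSgp S inv) {a s : S} (has : nle a s) (f : S) :
    nle (a * f * inv a) (s * f * inv s) := by
  simpa only [hS.inv_inv] using nle_conj hS (nle_inv hS has) f

end NaturalOrder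

section Fbar

variable {S : Type*} [Semigroup S] {inv : S → S} {F : Set S}

theorem mul_mem_fbar (hS : IsInvSgp S inv) {a b : S} (ha : a ∈ fbar inv F)
    (hb : b ∈ fbar inv F) : a * b ∈ fbar inv F := by
  intro f hf
  rw [hS.inv_mul_rev]
  constructor
  · simpa only [mul_assoc] using (hb _ (ha f hf).1).1
  · simpa only [mul_assoc] using (ha _ (hb f hf).2).2

theorem inv_mem_fbar (hS : IsInvSgp S inv) {a : S} (ha : a ∈ fbar inv F) :
    inv a ∈ fbar inv F := by
  intro f hf
  rw [hS.inv_inv]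
  exact (ha f hf).symm

theorem mem_fbar_of_nle (hS : IsInvSgp S inv) (hF : IsFilterE F) {a s : S}
    (ha : a ∈ fbar inv F) (has : nle a s) : s ∈ fbar inv F := by
  obtain ⟨-, hFidem, -, hFup⟩ := hF
  intro f hf
  exact ⟨hFup _ (ha f hf).1 _ (hS.conj_idem (hFidem f hf) s) (nle_conj hS has f),
    hFup _ (ha f hf).2 _ (hS.conj_idem' (hFidem f hf) s) (nle_conj' hS has f)⟩

theorem up_fbar (hS : IsInvSgp S inv) (hF : IsFilterE F) : up (fbar inv F) = fbar inv F :=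
  Set.Subset.antisymm (fun _ ⟨_, ha, has⟩ => mem_fbar_of_nle hS hF ha has)
    (fun s hs => ⟨s, hs, nle_refl hS s⟩)

theorem idemSet_fbar_subset (hS : IsInvSgp S inv) (hF : IsFilterE F) :
    idemSet (fbar inv F) ⊆ F := by
  obtain ⟨⟨f, hf⟩, hFidem, -, hFup⟩ := hF
  rintro e ⟨he, hee⟩
  have hefe : e * f * e ∈ F := by simpa only [hS.inv_eq_self_of_idem hee] using (he f hf).1
  exact hFup _ hefe e hee ⟨e * f, hS.idem_mul hee (hFidem f hf), rfl⟩

theorem subset_idemSet_fbar (hS : IsInvSgp S inv) (hF : IsFilterE F) :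
    F ⊆ idemSet (fbar inv F) := by
  obtain ⟨-, hFidem, hFmul, -⟩ := hF
  intro e he
  have hee := hFidem e he
  refine ⟨fun f hf => ?_, hee⟩
  have hefe : e * f * e = f * e := by
    rw [hS.idem_comm e f hee (hFidem f hf), mul_assoc, hee]
  rw [hS.inv_eq_self_of_idem hee, hefe]
  exact ⟨hFmul f hf e he, hFmul f hf e he⟩

end Fbar

/-- For a filter `F` in `E(S)`, the set `F̄` is a closed inverse
subsemigroup of `S` whose set of idempotents is exactly `F`. -/
theorem stmt3 {S : Type*} [Semigroup S] (inv : S → S) (hS : IsInvSgp S inv)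
    (F : Set S) (hF : IsFilterE F) :
    IsClosedInvSub inv (fbar inv F) ∧ idemSet (fbar inv F) = F :=
  ⟨⟨fun _ ha _ hb => mul_mem_fbar hS ha hb, fun _ ha => inv_mem_fbar hS ha, up_fbar hS hF⟩,
    (idemSet_fbar_subset hS hF).antisymm (subset_idemSet_fbar hS hF)⟩

end InvSgpPaper
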